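/- arXiv:2306.12708 — 2 statements merged into one kernel-verified Lean document; each statement's English description precedes it below -/
import Mathlib

section
/- Distinct input bit sequences of the same length produce disjoint final intervals in a binary arithmetic coder, provided all step probabilities lie in (0,1). -/
/-! Each step replaces `[a, b)` by one of the two halves `[a, m)`, `[m, b)` of a split at
`m = a + p (b - a)`, and every later step stays inside the half it started from. Two bit
sequences of equal length agree up to some first position, where they pick different halves
of the same interval; their final intervals lie in these two disjoint halves. -/

def acStep (iv : ℝ × ℝ) (pb : ℝ × Bool) : ℝ × ℝ :=
  if pb.2 then (iv.1 + pb.1 * (iv.2 - iv.1), iv.2)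
  else (iv.1, iv.1 + pb.1 * (iv.2 - iv.1))

def acEncode (l : List (ℝ × Bool)) : ℝ × ℝ := l.foldl acStep (0, 1)

open Set

section Nesting

variable {iv : ℝ × ℝ}

lemma acStep_fst_le_snd {pb : ℝ × Bool} (h : iv.1 ≤ iv.2) (hp : pb.1 ∈ Icc (0 : ℝ) 1) :
    (acStep iv pb).1 ≤ (acStep iv pb).2 := by
  obtain ⟨hp0, hp1⟩ := hp
  unfold acStep
  split_ifs <;> nlinarith

lemma Ico_acStep_subset {pb : ℝ × Bool} (h : iv.1 ≤ iv.2) (hp : pb.1 ∈ Icc (0 : ℝ) 1) :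
    Ico (acStep iv pb).1 (acStep iv pb).2 ⊆ Ico iv.1 iv.2 := by
  obtain ⟨hp0, hp1⟩ := hp
  unfold acStep
  split_ifs <;> exact Ico_subset_Ico (by nlinarith) (by nlinarith)

lemma foldl_acStep_fst_le_snd {l : List (ℝ × Bool)} (h : iv.1 ≤ iv.2)
    (hl : ∀ x ∈ l, x.1 ∈ Icc (0 : ℝ) 1) :
    (l.foldl acStep iv).1 ≤ (l.foldl acStep iv).2 := by
  induction l generalizing iv with
  | nil => exact h
  | cons a l ih =>
    exact ih (acStep_fst_le_snd h (hl a List.mem_cons_self))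
      fun x hx => hl x (List.mem_cons_of_mem a hx)

lemma Ico_foldl_acStep_subset {l : List (ℝ × Bool)} (h : iv.1 ≤ iv.2)
    (hl : ∀ x ∈ l, x.1 ∈ Icc (0 : ℝ) 1) :
    Ico (l.foldl acStep iv).1 (l.foldl acStep iv).2 ⊆ Ico iv.1 iv.2 := by
  induction l generalizing iv with
  | nil => exact subset_rfl
  | cons a l ih =>
    have ha := hl a List.mem_cons_self
    exact (ih (acStep_fst_le_snd h ha) fun x hx => hl x (List.mem_cons_of_mem a hx)).trans
      (Ico_acStep_subset h ha)

end Nesting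

lemma disjoint_Ico_acStep_of_ne (iv : ℝ × ℝ) (q : ℝ) {c c' : Bool} (hc : c ≠ c') :
    Disjoint (Ico (acStep iv (q, c)).1 (acStep iv (q, c)).2)
      (Ico (acStep iv (q, c')).1 (acStep iv (q, c')).2) := by
  cases c <;> cases c' <;> simp only [ne_eq, not_true_eq_false] at hc <;>
    simp only [acStep, Bool.false_eq_true, ↓reduceIte]
  exacts [Ico_disjoint_Ico_same, Ico_disjoint_Ico_same.symm]

lemma disjoint_Ico_foldl_acStep_zip {p : List ℝ} {b b' : List Bool} {iv : ℝ × ℝ}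
    (hiv : iv.1 ≤ iv.2) (hb : p.length = b.length) (hb' : p.length = b'.length)
    (hp : ∀ x ∈ p, x ∈ Icc (0 : ℝ) 1) (hne : b ≠ b') :
    Disjoint (Ico ((p.zip b).foldl acStep iv).1 ((p.zip b).foldl acStep iv).2)
      (Ico ((p.zip b').foldl acStep iv).1 ((p.zip b').foldl acStep iv).2) := by
  induction p generalizing b b' iv with
  | nil =>
    rw [List.length_nil, eq_comm, List.length_eq_zero_iff] at hb hb'
    exact absurd (hb.trans hb'.symm) hne
  | cons q p ih =>
    obtain _ | ⟨c, bs⟩ := b; · simp at hb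
    obtain _ | ⟨c', bs'⟩ := b'; · simp at hb'
    have hq := hp q List.mem_cons_self
    have hp' : ∀ x ∈ p, x ∈ Icc (0 : ℝ) 1 := fun x hx => hp x (List.mem_cons_of_mem q hx)
    have hzip (bs : List Bool) : ∀ x ∈ p.zip bs, x.1 ∈ Icc (0 : ℝ) 1 :=
      fun x hx => hp' x.1 (List.of_mem_zip hx).1
    simp only [List.zip_cons_cons, List.foldl_cons]
    by_cases hc : c = c'
    · subst hc
      exact ih (acStep_fst_le_snd hiv hq) (by simpa using hb) (by simpa using hb') hp'
        (by simpa using hne)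
    · exact (disjoint_Ico_acStep_of_ne iv q hc).mono
        (Ico_foldl_acStep_subset (acStep_fst_le_snd hiv hq) (hzip bs))
        (Ico_foldl_acStep_subset (acStep_fst_le_snd hiv hq) (hzip bs'))

/-- Distinct bit sequences of the same length produce disjoint final intervals in a
binary arithmetic coder with step probabilities in (0,1). -/
theorem stmt_11 :
    ∀ (p : List ℝ) (b b' : List Bool),
      p.length = b.length → p.length = b'.length →
      (∀ x ∈ p, x ∈ Set.Ioo (0:ℝ) 1) → b ≠ b' →
      Disjoint (Set.Ico (acEncode (p.zip b)).1 (acEncode (p.zip b)).2)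
               (Set.Ico (acEncode (p.zip b')).1 (acEncode (p.zip b')).2) := by
  intro p b b' hb hb' hp hne
  exact disjoint_Ico_foldl_acStep_zip zero_le_one hb hb'
    (fun x hx => Ioo_subset_Icc_self (hp x hx)) hne
end

section
/- The maximal size of a set C of words of length 3 over a 4-letter alphabet such that every infinite (or arbitrary finite) concatenation of words from C contains no run of 3 equal consecutive letters is at most 48. -/
/-- A list of letters contains a run of 3 equal consecutive letters. -/
def hasRun3 (l : List (Fin 4)) : Prop :=
  ∃ i : ℕ, ∃ x : Fin 4, l[i]? = some x ∧ l[i + 1]? = some x ∧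
    l[i + 2]? = some x

/-- Any set C of length-3 words over a 4-letter alphabet such that every finite
concatenation of words from C contains no run of 3 equal consecutive letters has
at most 48 elements. -/
theorem stmt_15 :
    ∀ C : Finset (Fin 3 → Fin 4),
      (∀ l : List (Fin 3 → Fin 4), (∀ w ∈ l, w ∈ C) →
        ¬ hasRun3 (l.flatMap fun w => List.ofFn w)) →
      C.card ≤ 48 := by
  intro C hC
  by_cases h : ∃ w ∈ C, w 1 = w 2
  · obtain ⟨w, hw, hww⟩ := h
    have key : ∀ v ∈ C, v 0 ≠ w 2 := by
      intro v hv hv0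
      apply hC [w, v]
      · intro u hu
        rcases List.mem_pair.mp hu with rfl | rfl <;> assumption
      · refine ⟨1, w 2, ?_, ?_, ?_⟩ <;>
          simp [List.flatMap, List.ofFn_succ, hww, hv0]
    have hsub : C ⊆ Finset.univ.filter (fun v => v 0 ≠ w 2) := by
      intro v hv
      exact Finset.mem_filter.mpr ⟨Finset.mem_univ _, key v hv⟩
    calc C.card ≤ _ := Finset.card_le_card hsub
      _ ≤ 48 := by
        have : ∀ a : Fin 4,
            (Finset.univ.filter (fun v : Fin 3 → Fin 4 => v 0 ≠ a)).card = 48 := by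
          decide
        exact le_of_eq (this (w 2))
  · push_neg at h
    have hsub : C ⊆ Finset.univ.filter (fun v : Fin 3 → Fin 4 => v 1 ≠ v 2) := by
      intro v hv
      exact Finset.mem_filter.mpr ⟨Finset.mem_univ _, h v hv⟩
    calc C.card ≤ _ := Finset.card_le_card hsub
      _ ≤ 48 := by decide
end
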